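/- arXiv:math/0612135 — 5 statements merged into one kernel-verified Lean document; each statement's English description precedes it below -/
import Mathlib

section
/- Let n be an even positive integer and let k be an integer with 1 ≤ k ≤ n−2. Then R_{n,k} = R_{n−1,k−1} − R_{n−1,k}. -/
open Finset

/-- Number of ascents of a permutation of `[n]` (positions `i` with `a_i < a_{i+1}`). -/
def ascents {n : ℕ} (A : Equiv.Perm (Fin n)) : ℕ :=
  (univ.filter fun i : Fin n => ∃ h : i.val + 1 < n, A i < A ⟨i.val + 1, h⟩).card

/-- Number of inversions of a permutation. -/
def invNum {n : ℕ} (A : Equiv.Perm (Fin n)) : ℕ :=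
  (univ.filter fun p : Fin n × Fin n => p.1 < p.2 ∧ A p.2 < A p.1).card

/-- A permutation is parity-alternate if consecutive entries have different parity. -/
def IsPAP {n : ℕ} (A : Equiv.Perm (Fin n)) : Prop :=
  ∀ i : Fin n, ∀ h : i.val + 1 < n, (A i).val % 2 ≠ (A ⟨i.val + 1, h⟩).val % 2

instance {n : ℕ} (A : Equiv.Perm (Fin n)) : Decidable (IsPAP A) := by
  unfold IsPAP; infer_instance

/-- `P_{n,k}`: number of even parity-alternate permutations of `[n]` with `k` ascents. -/
def papEven (n k : ℕ) : ℕ :=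
  (univ.filter fun A : Equiv.Perm (Fin n) => IsPAP A ∧ ascents A = k ∧ Even (invNum A)).card

/-- `Q_{n,k}`: number of odd parity-alternate permutations of `[n]` with `k` ascents. -/
def papOdd (n k : ℕ) : ℕ :=
  (univ.filter fun A : Equiv.Perm (Fin n) => IsPAP A ∧ ascents A = k ∧ Odd (invNum A)).card

/-- `S_{n,k}`: number of parity-alternate permutations of `[n]` with `k` ascents. -/
def papTotal (n k : ℕ) : ℕ :=
  (univ.filter fun A : Equiv.Perm (Fin n) => IsPAP A ∧ ascents A = k).card

/-- `R_{n,k} = P_{n,k} - Q_{n,k}`. -/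
def papSigned (n k : ℕ) : ℤ := (papEven n k : ℤ) - papOdd n k

/-- `B_{n,k}`: number of even permutations of `[n]` with `k` ascents. -/
def eulerEven (n k : ℕ) : ℕ :=
  (univ.filter fun A : Equiv.Perm (Fin n) => ascents A = k ∧ Even (invNum A)).card

/-- `C_{n,k}`: number of odd permutations of `[n]` with `k` ascents. -/
def eulerOdd (n k : ℕ) : ℕ :=
  (univ.filter fun A : Equiv.Perm (Fin n) => ascents A = k ∧ Odd (invNum A)).card

/-- `D_{n,k} = B_{n,k} - C_{n,k}`: the signed Eulerian number. -/
def eulerSigned (n k : ℕ) : ℤ := (eulerEven n k : ℤ) - eulerOdd n k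

/-!
Let `R_n(t) = ∑_A sign(A) t^(asc A)`, summed over the parity-alternate permutations `A` of
`Fin n`, so that `R_{n,k}` is the coefficient of `t^k`. For even `n` the cyclic shift of values
`ρ : x ↦ x + 1 mod n` is an odd permutation preserving parity alternation, so `A ↦ ρ * A`
gives `∑_A sign(A) t^(asc (ρ * A)) = -R_n(t)`. Shifting the values only changes the comparisons
next to the entry `n - 1`, which becomes `0`:
`asc (ρ * A) = asc A + [A starts with n - 1] - [A ends with n - 1]`.
Hence in `2 R_n(t) = ∑_A sign(A) (t^(asc A) - t^(asc (ρ * A)))` only the permutations with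
`n - 1` at an end survive. They are the parity-alternate `B` of `Fin (n - 1)` followed or
preceded by `n - 1` (as `n - 1` is odd, such a `B` begins and ends with even entries), and each
of them contributes `sign(B) (t - 1) t^(asc B)`. So `R_n(t) = (t - 1) R_{n-1}(t)`.
-/

open Equiv Polynomial

theorem Fin.ite_add_one_lt_add_one_add_ite {n : ℕ} (x y : Fin (n + 1)) :
    ((if x + 1 < y + 1 then 1 else 0) + if y = Fin.last n then 1 else 0 : ℕ) =
      (if x < y then 1 else 0) + if x = Fin.last n then 1 else 0 := by
  simp only [Fin.lt_def, Fin.val_add_one, Fin.ext_iff, Fin.val_last]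
  split_ifs <;> omega

namespace Equiv.Perm

variable {n : ℕ}

theorem sign_eq_neg_one_pow_invNum (σ : Perm (Fin n)) : (sign σ : ℤ) = (-1) ^ invNum σ := by
  rw [sign_eq_prod_prod_Iio, invNum, Finset.card_eq_sum_ones, ← Finset.prod_pow_eq_pow_sum,
    Finset.prod_filter, Fintype.prod_prod_type, Finset.prod_comm]
  push_cast
  refine Finset.prod_congr rfl fun j _ => ?_
  rw [← Finset.filter_gt_eq_Iio, Finset.prod_filter]
  refine Finset.prod_congr rfl fun i _ => ?_
  by_cases hij : i < j
  · rcases lt_or_gt_of_ne (σ.injective.ne hij.ne) with h | h <;> simp [hij, h, h.not_gt]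
  · simp [hij]

theorem ascents_eq_sum (A : Perm (Fin (n + 1))) :
    ascents A = ∑ i : Fin n, if A i.castSucc < A i.succ then 1 else 0 := by
  rw [ascents, ← Finset.card_filter, eq_comm, ← Finset.card_map Fin.castSuccEmb]
  refine congrArg Finset.card (Finset.ext fun i => ?_)
  simp only [Finset.mem_filter, Finset.mem_univ, true_and, Finset.mem_map, Fin.castSuccEmb_apply]
  constructor
  · rintro ⟨j, hlt, rfl⟩
    exact ⟨by simp, hlt⟩
  · rintro ⟨h, hlt⟩
    exact ⟨⟨i, by omega⟩, hlt, rfl⟩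

theorem isPAP_iff (A : Perm (Fin (n + 1))) :
    IsPAP A ↔ ∀ i : Fin n, (A i.castSucc).val % 2 ≠ (A i.succ).val % 2 :=
  ⟨fun h i => h i.castSucc (by simp), fun h i _ => h ⟨i, by omega⟩⟩

theorem _root_.IsPAP.val_mod_two (hn : Odd n) {B : Perm (Fin n)} (hB : IsPAP B) (i : Fin n) :
    (B i).val % 2 = i.val % 2 := by
  obtain ⟨m, rfl⟩ := Nat.exists_eq_add_one.2 hn.pos
  have hshift : ∀ i : Fin (m + 1), ((B i).val + i.val) % 2 = (B 0).val % 2 := by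
    intro i
    induction i using Fin.induction with
    | zero => simp
    | succ i ih =>
      have := (isPAP_iff B).1 hB i
      simp only [Fin.val_succ, Fin.val_castSucc] at ih ⊢
      omega
  suffices h0 : (B 0).val % 2 = 0 by have := hshift i; omega
  -- Otherwise `B` would swap the parities of all positions, but there is an odd number of them.
  by_contra h0
  have hswap : ∀ i : Fin (m + 1), (B i).val % 2 + i.val % 2 = 1 := fun i => by
    have := hshift i; omega
  have hsum := Finset.sum_congr rfl fun i (_ : i ∈ Finset.univ) => hswap i
  rw [Finset.sum_add_distrib, Equiv.sum_comp B (fun j => j.val % 2)] at hsum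
  simp only [Finset.sum_const, Finset.card_univ, Fintype.card_fin, smul_eq_mul, mul_one] at hsum
  obtain ⟨r, hr⟩ := hn
  omega

theorem finRotate_mul_apply (A : Perm (Fin (n + 1))) (i : Fin (n + 1)) :
    (finRotate (n + 1) * A) i = A i + 1 := by
  simp [mul_apply]

theorem sign_finRotate_of_odd (hn : Odd n) : sign (finRotate (n + 1)) = -1 := by
  rw [sign_finRotate, Nat.add_sub_cancel, hn.neg_one_pow]

theorem isPAP_finRotate_mul_iff (hn : Odd n) (A : Perm (Fin (n + 1))) :
    IsPAP (finRotate (n + 1) * A) ↔ IsPAP A := by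
  have hval : ∀ x : Fin (n + 1), (x + 1).val % 2 = (x.val + 1) % 2 := by
    intro x
    rw [Fin.val_add_one]
    split_ifs with h
    · rw [h, Fin.val_last]
      obtain ⟨r, rfl⟩ := hn
      omega
    · rfl
  refine forall₂_congr fun i h => ?_
  rw [finRotate_mul_apply, finRotate_mul_apply, hval, hval]
  omega

theorem ascents_finRotate_mul (A : Perm (Fin (n + 1))) :
    ascents (finRotate (n + 1) * A) + (if A (Fin.last n) = Fin.last n then 1 else 0) =
      ascents A + if A 0 = Fin.last n then 1 else 0 := by
  have hpairs := Finset.sum_congr rfl fun i (_ : i ∈ Finset.univ) =>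
    Fin.ite_add_one_lt_add_one_add_ite (A (Fin.castSucc i)) (A i.succ)
  rw [Finset.sum_add_distrib, Finset.sum_add_distrib] at hpairs
  have htop := (Fin.sum_univ_succ fun j => if A j = Fin.last n then 1 else 0).symm.trans
    (Fin.sum_univ_castSucc _)
  simp only [ascents_eq_sum, finRotate_mul_apply]
  omega

/-- The permutation `B 0, …, B (n-1), n` of `Fin (n + 1)`. -/
def appendTop (B : Perm (Fin n)) : Perm (Fin (n + 1)) :=
  finSuccEquivLast.symm.permCongr B.optionCongr

/-- The permutation `n, B 0, …, B (n-1)` of `Fin (n + 1)`. -/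
def prependTop (B : Perm (Fin n)) : Perm (Fin (n + 1)) :=
  appendTop B * (finRotate (n + 1))⁻¹

@[simp]
theorem appendTop_castSucc (B : Perm (Fin n)) (i : Fin n) :
    appendTop B i.castSucc = (B i).castSucc := by
  simp [appendTop]

@[simp]
theorem appendTop_last (B : Perm (Fin n)) : appendTop B (Fin.last n) = Fin.last n := by
  simp [appendTop]

@[simp]
theorem prependTop_zero (B : Perm (Fin n)) : prependTop B 0 = Fin.last n := by
  rw [prependTop, mul_apply, inv_eq_iff_eq.2 (finRotate_last (n := n)).symm, appendTop_last]

@[simp]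
theorem prependTop_succ (B : Perm (Fin n)) (i : Fin n) :
    prependTop B i.succ = (B i).castSucc := by
  rw [prependTop, mul_apply, inv_eq_iff_eq.2 (by simp : i.succ = finRotate (n + 1) i.castSucc),
    appendTop_castSucc]

@[simp]
theorem sign_appendTop (B : Perm (Fin n)) : sign (appendTop B) = sign B := by
  simp [appendTop]

theorem sign_prependTop (hn : Odd n) (B : Perm (Fin n)) : sign (prependTop B) = -sign B := by
  simp [prependTop, sign_finRotate_of_odd hn]

theorem appendTop_injective : Function.Injective (appendTop (n := n)) := fun _ _ h =>
  optionCongr_injective ((permCongr _).injective h)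

theorem prependTop_injective : Function.Injective (prependTop (n := n)) :=
  fun _ _ h => appendTop_injective (mul_left_injective _ h)

theorem exists_appendTop_eq {A : Perm (Fin (n + 1))} (h : A (Fin.last n) = Fin.last n) :
    ∃ B, appendTop B = A := by
  refine ⟨removeNone (finSuccEquivLast.permCongr A), ?_⟩
  rw [appendTop, map_equiv_removeNone]
  ext i
  simp [h]

theorem exists_prependTop_eq {A : Perm (Fin (n + 1))} (h : A 0 = Fin.last n) :
    ∃ B, prependTop B = A := by
  obtain ⟨B, hB⟩ := exists_appendTop_eq (A := A * finRotate (n + 1)) (by simp [h])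
  exact ⟨B, by rw [prependTop, hB, mul_inv_cancel_right]⟩

theorem ascents_appendTop (B : Perm (Fin (n + 1))) : ascents (appendTop B) = ascents B + 1 := by
  rw [ascents_eq_sum, ascents_eq_sum, Fin.sum_univ_castSucc]
  simp only [Fin.succ_castSucc, appendTop_castSucc, Fin.castSucc_lt_castSucc_iff, Fin.succ_last,
    appendTop_last, Fin.castSucc_lt_last, if_true]

theorem ascents_prependTop (B : Perm (Fin (n + 1))) : ascents (prependTop B) = ascents B := by
  rw [ascents_eq_sum, ascents_eq_sum, Fin.sum_univ_succ]
  simp only [Fin.castSucc_zero, prependTop_zero, ← Fin.succ_castSucc, prependTop_succ,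
    Fin.castSucc_lt_castSucc_iff]
  simp [Fin.le_last]

theorem isPAP_appendTop_iff (hn : Odd n) (B : Perm (Fin n)) : IsPAP (appendTop B) ↔ IsPAP B := by
  obtain ⟨m, rfl⟩ := Nat.exists_eq_add_one.2 hn.pos
  refine ⟨fun h => (isPAP_iff B).2 fun i => ?_, fun h => (isPAP_iff _).2 fun i => ?_⟩
  · simpa only [Fin.succ_castSucc, appendTop_castSucc, Fin.val_castSucc] using
      (isPAP_iff _).1 h i.castSucc
  · induction i using Fin.lastCases with
    | last =>
      have := h.val_mod_two hn (Fin.last m)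
      simp only [appendTop_castSucc, Fin.succ_last, appendTop_last, Fin.val_castSucc,
        Fin.val_last] at this ⊢
      omega
    | cast i => simpa only [Fin.succ_castSucc, appendTop_castSucc, Fin.val_castSucc] using
      (isPAP_iff B).1 h i

theorem isPAP_prependTop_iff (hn : Odd n) (B : Perm (Fin n)) :
    IsPAP (prependTop B) ↔ IsPAP B := by
  obtain ⟨m, rfl⟩ := Nat.exists_eq_add_one.2 hn.pos
  refine ⟨fun h => (isPAP_iff B).2 fun i => ?_, fun h => (isPAP_iff _).2 fun i => ?_⟩
  · simpa only [← Fin.succ_castSucc, prependTop_succ, Fin.val_castSucc] using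
      (isPAP_iff _).1 h i.succ
  · induction i using Fin.cases with
    | zero =>
      have := h.val_mod_two hn 0
      simp only [Fin.castSucc_zero, prependTop_zero, prependTop_succ, Fin.val_castSucc,
        Fin.val_last, Fin.val_zero] at this ⊢
      obtain ⟨r, hr⟩ := hn
      omega
    | succ i => simpa only [← Fin.succ_castSucc, prependTop_succ, Fin.val_castSucc] using
      (isPAP_iff B).1 h i

theorem ascents_finRotate_mul_appendTop (B : Perm (Fin (n + 1))) :
    ascents (finRotate (n + 2) * appendTop B) = ascents B := by
  have hzero : appendTop B 0 ≠ Fin.last _ := fun h =>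
    Fin.last_pos.ne ((appendTop B).injective (h.trans (appendTop_last B).symm))
  have := ascents_finRotate_mul (appendTop B)
  simp only [appendTop_last, hzero, if_true, if_false, add_zero, ascents_appendTop] at this
  exact Nat.add_right_cancel this

theorem ascents_finRotate_mul_prependTop (B : Perm (Fin (n + 1))) :
    ascents (finRotate (n + 2) * prependTop B) = ascents B + 1 := by
  have hlast : prependTop B (Fin.last _) ≠ Fin.last _ := fun h =>
    Fin.last_pos.ne ((prependTop B).injective ((prependTop_zero B).trans h.symm))
  have := ascents_finRotate_mul (prependTop B)
  simp only [prependTop_zero, hlast, if_true, if_false, add_zero, ascents_prependTop] at this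
  exact this

theorem image_appendTop_filter_isPAP (hn : Odd n) :
    (univ.filter IsPAP).image (appendTop (n := n)) =
      (univ.filter IsPAP).filter fun A => A (Fin.last n) = Fin.last n := by
  ext A
  simp only [Finset.mem_image, Finset.mem_filter, Finset.mem_univ, true_and]
  constructor
  · rintro ⟨B, hB, rfl⟩
    exact ⟨(isPAP_appendTop_iff hn B).2 hB, appendTop_last B⟩
  · rintro ⟨hA, hlast⟩
    obtain ⟨B, rfl⟩ := exists_appendTop_eq hlast
    exact ⟨B, (isPAP_appendTop_iff hn B).1 hA, rfl⟩

theorem image_prependTop_filter_isPAP (hn : Odd n) :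
    (univ.filter IsPAP).image (prependTop (n := n)) =
      (univ.filter IsPAP).filter fun A => A 0 = Fin.last n := by
  ext A
  simp only [Finset.mem_image, Finset.mem_filter, Finset.mem_univ, true_and]
  constructor
  · rintro ⟨B, hB, rfl⟩
    exact ⟨(isPAP_prependTop_iff hn B).2 hB, prependTop_zero B⟩
  · rintro ⟨hA, hzero⟩
    obtain ⟨B, rfl⟩ := exists_prependTop_eq hzero
    exact ⟨B, (isPAP_prependTop_iff hn B).1 hA, rfl⟩

theorem sum_filter_isPAP_eq_sum_appendTop_add_sum_prependTop {M : Type*} [AddCommMonoid M]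
    (hn : Odd n) (g : Perm (Fin (n + 1)) → M)
    (hg : ∀ A, A 0 ≠ Fin.last n → A (Fin.last n) ≠ Fin.last n → g A = 0) :
    ∑ A ∈ univ.filter IsPAP, g A =
      ∑ B ∈ univ.filter IsPAP, g (appendTop B) +
        ∑ B ∈ univ.filter IsPAP, g (prependTop B) := by
  rw [← Finset.sum_image appendTop_injective.injOn,
    ← Finset.sum_image prependTop_injective.injOn, image_appendTop_filter_isPAP hn,
    image_prependTop_filter_isPAP hn, ← Finset.sum_union, ← Finset.filter_or]
  · refine (Finset.sum_filter_of_ne fun A _ hA => ?_).symm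
    by_contra! h
    exact hA (hg A h.2 h.1)
  · refine Finset.disjoint_filter.2 fun A _ hlast hzero => ?_
    obtain ⟨m, rfl⟩ := Nat.exists_eq_add_one.2 hn.pos
    exact A.injective.ne Fin.last_pos.ne (hzero.trans hlast.symm)

end Equiv.Perm

open Equiv.Perm

noncomputable def papAscentPoly (n : ℕ) : ℤ[X] :=
  ∑ A ∈ (univ : Finset (Perm (Fin n))).filter IsPAP, C (sign A : ℤ) * X ^ ascents A

theorem coeff_papAscentPoly (n k : ℕ) : (papAscentPoly n).coeff k = papSigned n k := by
  have hsign : ∀ A : Perm (Fin n), (sign A : ℤ) = if Even (invNum A) then 1 else -1 := by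
    intro A
    rw [sign_eq_neg_one_pow_invNum]
    split_ifs with h
    · exact h.neg_one_pow
    · exact (Nat.not_even_iff_odd.1 h).neg_one_pow
  simp only [papAscentPoly, finsetSum_coeff, coeff_C_mul_X_pow, @eq_comm ℕ k]
  rw [← Finset.sum_filter]
  simp only [hsign, Finset.sum_ite, Finset.sum_const, Finset.filter_filter, papSigned, papEven,
    papOdd, ← Nat.not_even_iff_odd, and_assoc, smul_neg, nsmul_one, sub_eq_add_neg]

theorem papAscentPoly_add_two {n : ℕ} (hn : Even n) :
    papAscentPoly (n + 2) = (X - 1) * papAscentPoly (n + 1) := by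
  have hodd : Odd (n + 1) := hn.add_one
  set d : Perm (Fin (n + 2)) → ℤ[X] := fun A =>
    C (sign A : ℤ) * (X ^ ascents A - X ^ ascents (finRotate (n + 2) * A)) with hd
  have hrotate : ∑ A ∈ univ.filter IsPAP,
      C (sign A : ℤ) * X ^ ascents (finRotate (n + 2) * A) = -papAscentPoly (n + 2) := by
    rw [papAscentPoly, ← Finset.sum_neg_distrib]
    refine Finset.sum_equiv (Equiv.mulLeft (finRotate (n + 2)))
      (fun A => by simp [isPAP_finRotate_mul_iff hodd]) fun A _ => ?_
    simp [sign_finRotate_of_odd hodd]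
  have htwice : 2 * papAscentPoly (n + 2) = ∑ A ∈ univ.filter IsPAP, d A := by
    simp only [hd, mul_sub, Finset.sum_sub_distrib, hrotate]
    rw [papAscentPoly]
    ring
  have happend (B : Perm (Fin (n + 1))) :
      d (appendTop B) = (X - 1) * (C (sign B : ℤ) * X ^ ascents B) := by
    simp only [hd, sign_appendTop, ascents_appendTop, ascents_finRotate_mul_appendTop]
    ring
  have hprepend (B : Perm (Fin (n + 1))) :
      d (prependTop B) = (X - 1) * (C (sign B : ℤ) * X ^ ascents B) := by
    simp only [hd, sign_prependTop hodd, ascents_prependTop, ascents_finRotate_mul_prependTop,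
      Units.val_neg, map_neg]
    ring
  have hsplit := sum_filter_isPAP_eq_sum_appendTop_add_sum_prependTop hodd d
    fun A hzero hlast => by
      have := ascents_finRotate_mul A
      simp only [hzero, hlast, if_false, add_zero] at this
      simp [hd, this]
  rw [Finset.sum_congr rfl fun B _ => happend B, Finset.sum_congr rfl fun B _ => hprepend B,
    ← Finset.mul_sum] at hsplit
  refine mul_left_cancel₀ two_ne_zero (htwice.trans ?_)
  rw [hsplit, papAscentPoly]
  ring

theorem papSigned_recurrence_even_general (n k : ℕ) (hn : Even n) (hn0 : 0 < n)
    (hk1 : 1 ≤ k) :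
    papSigned n k = papSigned (n - 1) (k - 1) - papSigned (n - 1) k := by
  obtain ⟨m, rfl⟩ : ∃ m, n = m + 2 := ⟨n - 2, by obtain ⟨r, hr⟩ := hn; omega⟩
  obtain ⟨j, rfl⟩ : ∃ j, k = j + 1 := ⟨k - 1, by omega⟩
  have hm : Even m := by simpa [Nat.even_add] using hn
  rw [← coeff_papAscentPoly, papAscentPoly_add_two hm, ← C_1, coeff_X_sub_C_mul,
    coeff_papAscentPoly, coeff_papAscentPoly]
  simp

theorem papSigned_recurrence_even (n k : ℕ) (hn : Even n) (hn0 : 0 < n)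
    (hk1 : 1 ≤ k) (hk2 : k ≤ n - 2) :
    papSigned n k = papSigned (n - 1) (k - 1) - papSigned (n - 1) k :=
  papSigned_recurrence_even_general n k hn hn0 hk1
end

section
/- Let n be an odd positive integer and let k be an integer with 0 ≤ k ≤ n−1. Then D_{n,k} = R_{n,k}, i.e., the signed Eulerian number equals the difference between the number of even parity-alternate permutations and the number of odd parity-alternate permutations of [n] with exactly k ascents. -/
open Finset

/-!
Since `Perm.sign A = (-1) ^ invNum A`, both `D_{n,k}` and `R_{n,k}` are sums of signs, and
`D_{n,k} - R_{n,k}` is the signed count of the non-parity-alternate permutations with `k` ascents.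
For odd `n` no permutation of `Fin n` changes the parity of every point, so a parity-alternate
`A` satisfies `A i ≡ i [MOD 2]`; hence `A` is parity-alternate iff `A⁻¹` is, i.e. iff no value `x`
has `x` and `x + 1` at positions of equal parity. Otherwise, swapping the least such `x` with
`x + 1` is an involution that reverses the sign and, the two positions being non-adjacent,
preserves the ascents; so the signed count vanishes.
-/

open Equiv

variable {n : ℕ}

theorem sign_eq_neg_one_pow_invNum (A : Perm (Fin n)) : Perm.sign A = (-1) ^ invNum A := by
  rw [Perm.sign_eq_prod_prod_Iio, invNum, ← Finset.prod_const, Finset.prod_filter,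
    Fintype.prod_prod_type_right]
  refine Finset.prod_congr rfl fun j _ => ?_
  rw [← Finset.filter_gt_eq_Iio, Finset.prod_filter]
  refine Finset.prod_congr rfl fun i _ => ?_
  by_cases hij : i < j
  · rcases (A.injective.ne hij.ne).lt_or_gt with h | h <;> simp [hij, h, h.not_gt]
  · simp [hij]

theorem card_filter_even_invNum_sub_card_filter_odd_invNum (s : Finset (Perm (Fin n))) :
    (#(s.filter fun A => Even (invNum A)) : ℤ) - #(s.filter fun A => Odd (invNum A)) =
      ∑ A ∈ s, (Perm.sign A : ℤ) := by
  have heven : ∀ A ∈ s.filter fun A => Even (invNum A), (Perm.sign A : ℤ) = 1 := fun A hA => by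
    rw [sign_eq_neg_one_pow_invNum, (Finset.mem_filter.1 hA).2.neg_one_pow, Units.val_one]
  have hodd : ∀ A ∈ s.filter fun A => ¬Even (invNum A), (Perm.sign A : ℤ) = -1 := fun A hA => by
    rw [sign_eq_neg_one_pow_invNum,
      (Nat.not_even_iff_odd.1 (Finset.mem_filter.1 hA).2).neg_one_pow, Units.val_neg, Units.val_one]
  rw [← Finset.sum_filter_add_sum_filter_not s fun A => Even (invNum A),
    Finset.sum_congr rfl heven, Finset.sum_congr rfl hodd]
  simp [sub_eq_add_neg]

theorem eulerSigned_eq_sum_sign (k : ℕ) :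
    eulerSigned n k =
      ∑ A ∈ univ.filter fun A : Perm (Fin n) => ascents A = k, (Perm.sign A : ℤ) := by
  rw [← card_filter_even_invNum_sub_card_filter_odd_invNum, Finset.filter_filter,
    Finset.filter_filter]
  rfl

theorem papSigned_eq_sum_sign (k : ℕ) :
    papSigned n k =
      ∑ A ∈ univ.filter fun A : Perm (Fin n) => IsPAP A ∧ ascents A = k, (Perm.sign A : ℤ) := by
  rw [← card_filter_even_invNum_sub_card_filter_odd_invNum, Finset.filter_filter,
    Finset.filter_filter]
  simp only [and_assoc]
  rfl

theorem Equiv.swap_apply_lt_swap_apply_iff {α : Type*} [LinearOrder α] {u v a b : α}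
    (huv : u ⋖ v) (hab : ¬(a = u ∧ b = v)) (hba : ¬(a = v ∧ b = u)) :
    swap u v a < swap u v b ↔ a < b := by
  have h₁ : ∀ c, u < c → v ≤ c := fun c => huv.ge_of_gt
  have h₂ : ∀ c, c < v → c ≤ u := fun c => huv.le_of_lt
  have := huv.lt
  rw [swap_apply_def, swap_apply_def]
  split_ifs <;> grind

theorem Equiv.Perm.exists_val_mod_two_eq (hn : Odd n) (σ : Perm (Fin n)) :
    ∃ i, (σ i).val % 2 = i.val % 2 := by
  by_contra! hflip
  have hsum : ∑ i, (σ i).val % 2 = ∑ i : Fin n, i.val % 2 := Equiv.sum_comp σ fun i => i.val % 2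
  have htotal : ∑ i, ((σ i).val % 2 + i.val % 2) = n := by
    rw [Finset.sum_congr rfl fun i _ => show (σ i).val % 2 + i.val % 2 = 1 by
      have := hflip i; omega]
    simp
  rw [Finset.sum_add_distrib, hsum] at htotal
  exact Nat.not_even_iff_odd.2 hn ⟨_, htotal.symm⟩

theorem IsPAP.val_mod_two_s1 [NeZero n] {A : Perm (Fin n)} (hA : IsPAP A) (i : Fin n) :
    (A i).val % 2 = ((A 0).val + i.val) % 2 := by
  obtain ⟨k, hk⟩ := i
  induction k with
  | zero => rfl
  | succ k ih =>
    have hstep : (A ⟨k, by omega⟩).val % 2 ≠ (A ⟨k + 1, hk⟩).val % 2 := hA ⟨k, by omega⟩ hk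
    have : (A ⟨k, by omega⟩).val % 2 = ((A 0).val + k) % 2 := ih (by omega)
    show _ = ((A 0).val + (k + 1)) % 2
    omega

theorem IsPAP.val_mod_two_of_odd (hn : Odd n) {A : Perm (Fin n)} (hA : IsPAP A) (i : Fin n) :
    (A i).val % 2 = i.val % 2 := by
  have : NeZero n := ⟨hn.pos.ne'⟩
  obtain ⟨j, hj⟩ := A.exists_val_mod_two_eq hn
  have := hA.val_mod_two_s1 j
  have := hA.val_mod_two_s1 i
  omega

theorem isPAP_of_val_mod_two {A : Perm (Fin n)} (h : ∀ i, (A i).val % 2 = i.val % 2) :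
    IsPAP A := fun i hi => by
  rw [h, h]
  dsimp only
  omega

theorem isPAP_iff_of_odd (hn : Odd n) {A : Perm (Fin n)} :
    IsPAP A ↔ ∀ i, (A i).val % 2 = i.val % 2 :=
  ⟨IsPAP.val_mod_two_of_odd hn, isPAP_of_val_mod_two⟩

theorem isPAP_inv_iff_of_odd (hn : Odd n) {A : Perm (Fin n)} : IsPAP A⁻¹ ↔ IsPAP A := by
  rw [isPAP_iff_of_odd hn, isPAP_iff_of_odd hn]
  refine ⟨fun h i => ?_, fun h i => ?_⟩
  · simpa using (h (A i)).symm
  · simpa using (h (A⁻¹ i)).symm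

section ParityMatches

variable [NeZero n]

-- `x.val + 1 < n` excludes `x = n - 1`, for which `x + 1` wraps around to `0` in `Fin n`.
def parityMatches (A : Perm (Fin n)) : Finset (Fin n) :=
  univ.filter fun x => x.val + 1 < n ∧ (A⁻¹ x).val % 2 = (A⁻¹ (x + 1)).val % 2

theorem parityMatches_eq_empty_iff {A : Perm (Fin n)} : parityMatches A = ∅ ↔ IsPAP A⁻¹ := by
  rw [parityMatches, Finset.filter_eq_empty_iff]
  refine forall_congr' fun x => ?_
  simp only [Finset.mem_univ, true_implies, not_and]
  refine forall_congr' fun hx => ?_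
  rw [show x + 1 = ⟨x.val + 1, hx⟩ from Fin.ext (Fin.val_add_one_of_lt' hx)]

section
variable {A : Perm (Fin n)} {x : Fin n} (hx : x ∈ parityMatches A)
include hx

theorem val_add_one_of_mem_parityMatches : (x + 1).val = x.val + 1 :=
  Fin.val_add_one_of_lt' (Finset.mem_filter.1 hx).2.1

theorem inv_swap_mul_apply_val_mod_two_of_mem_parityMatches (z : Fin n) :
    ((swap x (x + 1) * A)⁻¹ z).val % 2 = (A⁻¹ z).val % 2 := by
  have hpar := (Finset.mem_filter.1 hx).2.2
  rw [mul_inv_rev, swap_inv, Perm.mul_apply, swap_apply_def]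
  split_ifs with h₁ h₂
  · rw [h₁, hpar]
  · rw [h₂, hpar]
  · rfl

theorem parityMatches_swap_mul_of_mem : parityMatches (swap x (x + 1) * A) = parityMatches A := by
  simp only [parityMatches, inv_swap_mul_apply_val_mod_two_of_mem_parityMatches hx]

theorem sign_swap_mul_of_mem_parityMatches : Perm.sign (swap x (x + 1) * A) = -Perm.sign A := by
  have hne : x ≠ x + 1 := fun h => by
    have := congrArg Fin.val h
    rw [val_add_one_of_mem_parityMatches hx] at this
    omega
  rw [Perm.sign_mul, Perm.sign_swap hne, neg_one_mul]

theorem ascents_swap_mul_of_mem_parityMatches : ascents (swap x (x + 1) * A) = ascents A := by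
  have hcov : x ⋖ x + 1 := by
    refine ⟨Fin.lt_def.2 ?_, fun c h₁ h₂ => ?_⟩ <;>
      simp only [Fin.lt_def, val_add_one_of_mem_parityMatches hx] at * <;> omega
  have hpar := (Finset.mem_filter.1 hx).2.2
  unfold ascents
  congr 1
  refine Finset.filter_congr fun i _ => exists_congr fun hi => ?_
  rw [Perm.mul_apply, Perm.mul_apply]
  refine swap_apply_lt_swap_apply_iff hcov ?_ ?_ <;> rintro ⟨hAi, hAi'⟩ <;>
  · rw [Perm.inv_eq_iff_eq.2 hAi.symm, Perm.inv_eq_iff_eq.2 hAi'.symm] at hpar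
    dsimp only at hpar
    omega

end

def parityToggle (A : Perm (Fin n)) : Perm (Fin n) :=
  if h : (parityMatches A).Nonempty then
    swap ((parityMatches A).min' h) ((parityMatches A).min' h + 1) * A
  else A

theorem parityToggle_of_nonempty {A : Perm (Fin n)} (h : (parityMatches A).Nonempty) :
    parityToggle A = swap ((parityMatches A).min' h) ((parityMatches A).min' h + 1) * A :=
  dif_pos h

theorem parityMatches_parityToggle (A : Perm (Fin n)) :
    parityMatches (parityToggle A) = parityMatches A := by
  by_cases h : (parityMatches A).Nonempty
  · rw [parityToggle_of_nonempty h, parityMatches_swap_mul_of_mem ((parityMatches A).min'_mem h)]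
  · rw [parityToggle, dif_neg h]

theorem parityToggle_parityToggle (A : Perm (Fin n)) : parityToggle (parityToggle A) = A := by
  by_cases h : (parityMatches A).Nonempty
  · have h' : (parityMatches (parityToggle A)).Nonempty := by rwa [parityMatches_parityToggle]
    rw [parityToggle_of_nonempty h']
    simp_rw [parityMatches_parityToggle]
    conv_lhs => enter [2]; rw [parityToggle_of_nonempty h]
    rw [← mul_assoc, swap_mul_self, one_mul]
  · have h' : ¬(parityMatches (parityToggle A)).Nonempty := by rwa [parityMatches_parityToggle]
    rw [parityToggle, dif_neg h', parityToggle, dif_neg h]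

theorem sign_parityToggle {A : Perm (Fin n)} (h : (parityMatches A).Nonempty) :
    Perm.sign (parityToggle A) = -Perm.sign A := by
  rw [parityToggle_of_nonempty h,
    sign_swap_mul_of_mem_parityMatches ((parityMatches A).min'_mem h)]

theorem ascents_parityToggle (A : Perm (Fin n)) : ascents (parityToggle A) = ascents A := by
  by_cases h : (parityMatches A).Nonempty
  · rw [parityToggle_of_nonempty h,
      ascents_swap_mul_of_mem_parityMatches ((parityMatches A).min'_mem h)]
  · rw [parityToggle, dif_neg h]

theorem sum_sign_filter_ascents_parityMatches_nonempty (k : ℕ) :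
    ∑ A ∈ univ.filter (fun A : Perm (Fin n) => ascents A = k ∧ (parityMatches A).Nonempty),
      (Perm.sign A : ℤ) = 0 := by
  have hmem : ∀ {A}, A ∈ univ.filter (fun A : Perm (Fin n) =>
      ascents A = k ∧ (parityMatches A).Nonempty) → (parityMatches A).Nonempty :=
    fun hA => (Finset.mem_filter.1 hA).2.2
  refine Finset.sum_involution (fun A _ => parityToggle A) (fun A hA => ?_)
    (fun A hA _ hfix => units_ne_neg_self (Perm.sign A) ?_) (fun A hA => ?_)
    (fun A _ => parityToggle_parityToggle A)
  · rw [sign_parityToggle (hmem hA), Units.val_neg, add_neg_cancel]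
  · rw [← sign_parityToggle (hmem hA), hfix]
  · simpa only [Finset.mem_filter, Finset.mem_univ, true_and, ascents_parityToggle,
      parityMatches_parityToggle] using hA

theorem isPAP_iff_parityMatches_eq_empty (hn : Odd n) {A : Perm (Fin n)} :
    IsPAP A ↔ parityMatches A = ∅ := by
  rw [parityMatches_eq_empty_iff, isPAP_inv_iff_of_odd hn]

end ParityMatches

theorem eulerSigned_eq_papSigned_of_odd_general (n k : ℕ) (hn : Odd n) :
    eulerSigned n k = papSigned n k := by
  have : NeZero n := ⟨hn.pos.ne'⟩
  rw [eulerSigned_eq_sum_sign, papSigned_eq_sum_sign,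
    ← Finset.sum_filter_add_sum_filter_not _ fun A => (parityMatches A).Nonempty,
    Finset.filter_filter, sum_sign_filter_ascents_parityMatches_nonempty, zero_add,
    Finset.filter_filter]
  refine Finset.sum_congr (Finset.filter_congr fun A _ => ?_) fun _ _ => rfl
  rw [isPAP_iff_parityMatches_eq_empty hn, Finset.not_nonempty_iff_eq_empty, and_comm]

theorem eulerSigned_eq_papSigned_of_odd (n k : ℕ) (hn : Odd n) (hk : k ≤ n - 1) :
    eulerSigned n k = papSigned n k :=
  eulerSigned_eq_papSigned_of_odd_general n k hn
end

section
/- Let n be an even positive integer, let k be an integer with 1 ≤ k ≤ n−1, and let d be a positive divisor of n such that gcd(k, n/d) > 1. Then there is no canonical parity-alternate permutation A of [n] with exactly k ascents whose minimal period under τ is d; that is, no such A (of either parity) satisfies τ^d A = A with d minimal among positive exponents. -/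
open Finset

/-- The operator σ on permutations of `[n]`: add one to every entry, replacing `n+1` by `1`,
except that if `n` is the last (resp. first) entry it is removed and `1` is put at the
first (resp. last) position. -/
def sigmaOp {n : ℕ} (A : Equiv.Perm (Fin n)) : Equiv.Perm (Fin n) :=
  if h : n = 0 then A
  else
    let lastE : Fin n := ⟨n - 1, by omega⟩
    if A lastE = lastE then
      -- `n` is the last entry: σ(a₁⋯aₙ₋₁ n) = 1 (a₁+1) ⋯ (aₙ₋₁+1)
      ((finRotate n).symm.trans A).trans (finRotate n)
    else if A ⟨0, by omega⟩ = lastE then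
      -- `n` is the first entry: σ(n a₁⋯aₙ₋₁) = (a₁+1) ⋯ (aₙ₋₁+1) 1
      ((finRotate n).trans A).trans (finRotate n)
    else
      A.trans (finRotate n)

/-- The operator τ on canonical permutations (those with last entry `n`):
`τ A = σ^[n - a_{n-1}] A`, where `a_{n-1}` is the second-to-last (1-based) entry. -/
def tauOp {n : ℕ} (A : Equiv.Perm (Fin n)) : Equiv.Perm (Fin n) :=
  if h : n = 0 then A
  else sigmaOp^[n - 1 - (A ⟨n - 2, by omega⟩).val] A

/-!
For a canonical `A`, one step of `τ` rotates positions and values at once: in `ℤ/n`,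
`τ A x = A (x - 1) + c`. Hence `τ^d A = A` says `A (x + d) = A x + C` for all `x`. The cyclic
gaps `(A (x + 1) - A x) mod n` then have period `d`, and they sum to `n·D` over all `x`, where
`D = n - k` counts cyclic descents; so a window of `d` of them sums to `d·D`, and `C ≡ d·D`.
With `g = gcd(k, n/d)`, which divides `D`, this gives `A (n/g) = A 0 + (n/g)·D = A 0`, forcing
`g = 1`.
-/

open Fin.NatCast Fin.CommRing

section Tau

variable {m : ℕ}

theorem sigmaOp_apply_of_canonical {A : Equiv.Perm (Fin (m + 1))}
    (hA : A (Fin.last m) = Fin.last m) (x : Fin (m + 1)) :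
    sigmaOp A x = A (x - 1) + 1 := by
  have hidx : (⟨m + 1 - 1, by omega⟩ : Fin (m + 1)) = Fin.last m := rfl
  have hrot : (finRotate (m + 1)).symm x = x - 1 := by
    rw [Equiv.symm_apply_eq, finRotate_apply, sub_add_cancel]
  simp only [sigmaOp, dif_neg (Nat.succ_ne_zero m), hidx, if_pos hA, Equiv.trans_apply, hrot,
    finRotate_apply]

theorem sigmaOp_apply_of_ne_last {A : Equiv.Perm (Fin (m + 1))}
    (hlast : A (Fin.last m) ≠ Fin.last m) (hzero : A 0 ≠ Fin.last m) (x : Fin (m + 1)) :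
    sigmaOp A x = A x + 1 := by
  have hidx : (⟨m + 1 - 1, by omega⟩ : Fin (m + 1)) = Fin.last m := rfl
  simp only [sigmaOp, dif_neg (Nat.succ_ne_zero m), hidx, Fin.zero_eta, if_neg hlast,
    if_neg hzero, Equiv.trans_apply, finRotate_apply]

theorem iterate_sigmaOp_apply_of_canonical {A : Equiv.Perm (Fin (m + 1))}
    (hA : A (Fin.last m) = Fin.last m) {j : ℕ} (hj : j + (A (Fin.last m - 1)).val < m)
    (x : Fin (m + 1)) :
    sigmaOp^[j + 1] A x = A (x - 1) + (j + 1 : ℕ) := by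
  induction j generalizing x with
  | zero => simpa using sigmaOp_apply_of_canonical hA x
  | succ j ih =>
    have ih := ih (by omega)
    have hlast_eq : Fin.last m = -1 := eq_neg_of_add_eq_zero_left (Fin.last_add_one m)
    rw [Function.iterate_succ_apply', sigmaOp_apply_of_ne_last, ih, add_assoc]
    · push_cast; ring
    · rw [ih, Ne, Fin.ext_iff, Fin.val_add, Fin.val_natCast, Nat.add_mod_mod,
        Nat.mod_eq_of_lt (by omega), Fin.val_last]
      omega
    · have : A (0 - 1) + ((j + 1 : ℕ) : Fin (m + 1)) = (j : Fin (m + 1)) := by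
        rw [zero_sub, ← hlast_eq, hA, hlast_eq]; push_cast; ring
      rw [ih, this, Ne, Fin.ext_iff, Fin.val_natCast, Nat.mod_eq_of_lt (by omega), Fin.val_last]
      omega

theorem tauOp_apply_of_canonical {A : Equiv.Perm (Fin (m + 1))}
    (hA : A (Fin.last m) = Fin.last m) (x : Fin (m + 1)) :
    tauOp A x = A (x - 1) + (Fin.last m - A (Fin.last m - 1)) := by
  rcases Nat.eq_zero_or_pos m with rfl | hm
  · exact Subsingleton.elim (α := Fin 1) _ _
  have hlast_ne_zero : Fin.last m ≠ 0 := by simp [Fin.ext_iff]; omega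
  have hidx : (⟨m + 1 - 2, by omega⟩ : Fin (m + 1)) = Fin.last m - 1 := by
    simp [Fin.ext_iff, Fin.coe_sub_one, hlast_ne_zero]
  have hv : (A (Fin.last m - 1)).val < m := by
    refine Fin.val_lt_last fun h => ?_
    have h1 : Fin.last m - 1 = Fin.last m := A.injective (h.trans hA.symm)
    rw [sub_eq_self, Fin.one_eq_zero_iff] at h1
    omega
  rw [tauOp, dif_neg (Nat.succ_ne_zero m), hidx,
    show m + 1 - 1 - (A (Fin.last m - 1)).val = (m - (A (Fin.last m - 1)).val - 1) + 1 by omega,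
    iterate_sigmaOp_apply_of_canonical hA (by omega)]
  congr 1
  rw [Fin.ext_iff, Fin.val_natCast, Fin.sub_val_of_le (Fin.le_last _), Fin.val_last,
    Nat.mod_eq_of_lt (by omega)]
  omega

theorem tauOp_apply_last {A : Equiv.Perm (Fin (m + 1))} (hA : A (Fin.last m) = Fin.last m) :
    tauOp A (Fin.last m) = Fin.last m := by
  rw [tauOp_apply_of_canonical hA, add_sub_cancel]

theorem iterate_tauOp_apply {A : Equiv.Perm (Fin (m + 1))} (hA : A (Fin.last m) = Fin.last m)
    (l : ℕ) : ∃ c, ∀ x, tauOp^[l] A x = A (x - l) + c := by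
  induction l generalizing A with
  | zero => exact ⟨0, fun x => by simp⟩
  | succ l ih =>
    obtain ⟨c, hc⟩ := ih (tauOp_apply_last hA)
    refine ⟨Fin.last m - A (Fin.last m - 1) + c, fun x => ?_⟩
    rw [Function.iterate_succ_apply, hc, tauOp_apply_of_canonical hA, add_assoc, Nat.cast_succ,
      sub_sub]

end Tau

theorem ascents_eq_card_lt_apply_add_one {m : ℕ} {A : Equiv.Perm (Fin (m + 1))}
    (hA : A (Fin.last m) = Fin.last m) :
    ascents A = #{x | A x < A (x + 1)} := by
  refine congrArg card (filter_congr fun i _ => ?_)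
  by_cases hi : i.val + 1 < m + 1
  · have hsucc : i + 1 = ⟨i.val + 1, hi⟩ :=
      Fin.ext (Fin.val_add_one_of_lt (Fin.lt_last_iff_ne_last.mpr fun h => by simp [h] at hi))
    simp [hi, hsucc]
  · have hlast : i = Fin.last m := Fin.ext (by simp; omega)
    simp [hlast, hA, Fin.last_add_one, Fin.le_last]

section Cyclic

variable {n : ℕ} [NeZero n]

theorem card_lt_apply_add_one_add_card_gt {α : Type*} [LinearOrder α] {f : Fin n → α}
    (hf : Function.Injective f) (hn : 1 < n) :
    #{x | f x < f (x + 1)} + #{x | f (x + 1) < f x} = n := by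
  have : Nontrivial (Fin n) := Fin.nontrivial_iff_two_le.mpr hn
  have hne : ∀ x : Fin n, f (x + 1) ≠ f x := fun x h => one_ne_zero (add_eq_left.mp (hf h))
  have hsplit := card_filter_add_card_filter_not (s := univ) (fun x : Fin n => f x < f (x + 1))
  rw [card_univ, Fintype.card_fin] at hsplit
  convert hsplit using 3
  refine filter_congr fun x _ => ?_
  exact ⟨fun h => not_lt.mpr h.le, fun h => lt_of_le_of_ne (not_lt.mp h) (hne x)⟩

theorem sum_val_sub_eq_mul_card (f : Fin n → Fin n) :
    ∑ x, (f (x + 1) - f x).val = n * #{x | f (x + 1) < f x} := by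
  have hterm : ∀ x, (f (x + 1) - f x).val + (f x).val
      = (f (x + 1)).val + n * if f (x + 1) < f x then 1 else 0 := by
    intro x
    split_ifs with h
    · have := Fin.coe_sub_iff_lt.mpr h; omega
    · have := Fin.coe_sub_iff_le.mpr (not_lt.mp h); omega
  have hshift : ∑ x : Fin n, (f (x + 1)).val = ∑ x, (f x).val :=
    Equiv.sum_comp (Equiv.addRight 1) fun x => (f x).val
  have hsum := Finset.sum_congr rfl fun x (_ : x ∈ univ) => hterm x
  rw [sum_add_distrib, sum_add_distrib, hshift, ← mul_sum, ← card_filter] at hsum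
  omega

theorem card_smul_sum_range_eq {M : Type*} [AddCancelCommMonoid M] (f : Fin n → M) (d : ℕ)
    (hf : ∀ x, f (x + d) = f x) :
    n • ∑ i ∈ range d, f i = d • ∑ x, f x := by
  set window : Fin n → M := fun x => ∑ i ∈ range d, f (x + i)
  have hstep : ∀ x, window (x + 1) = window x := by
    intro x
    apply add_right_cancel (b := f x)
    have h := sum_range_succ' (fun i => f (x + i)) d
    rw [sum_range_succ, hf, Nat.cast_zero, add_zero] at h
    have hshift : ∀ i : ℕ, x + ((i + 1 : ℕ) : Fin n) = x + 1 + i := fun i => by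
      push_cast; ring
    simpa only [window, hshift] using h.symm
  have hconst : ∀ x, window x = window 0 := by
    suffices ∀ k : ℕ, window k = window 0 from fun x => by simpa using this x.val
    intro k
    induction k with
    | zero => simp
    | succ k ih => rw [Nat.cast_succ, hstep, ih]
  calc n • ∑ i ∈ range d, f i = ∑ x, window x := by
        rw [sum_congr rfl fun x _ => hconst x, sum_const, card_univ, Fintype.card_fin]
        simp only [window, zero_add]
    _ = ∑ i ∈ range d, ∑ x, f (x + i) := sum_comm
    _ = ∑ i ∈ range d, ∑ x, f x :=
        sum_congr rfl fun i _ => Equiv.sum_comp (Equiv.addRight (i : Fin n)) f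
    _ = d • ∑ x, f x := by rw [sum_const, card_range]

theorem shift_eq_natCast_mul_card {f : Fin n → Fin n} {d : ℕ} {C : Fin n}
    (h : ∀ x, f (x + d) = f x + C) :
    C = ((d * #{x | f (x + 1) < f x} : ℕ) : Fin n) := by
  set jump : Fin n → ℕ := fun x => (f (x + 1) - f x).val
  have hperiodic : ∀ x, jump (x + d) = jump x := by
    intro x
    simp only [jump]
    rw [add_right_comm x, h, h, add_sub_add_right_eq_sub]
  have hwindow : ∑ i ∈ range d, jump i = d * #{x | f (x + 1) < f x} := by
    have h := card_smul_sum_range_eq jump d hperiodic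
    rw [smul_eq_mul, smul_eq_mul, sum_val_sub_eq_mul_card, mul_left_comm] at h
    exact Nat.eq_of_mul_eq_mul_left (Nat.pos_of_neZero n) h
  have htelescope := sum_range_sub (fun i : ℕ => f i) d
  simp only [Nat.cast_succ, Nat.cast_zero] at htelescope
  rw [← hwindow, Nat.cast_sum]
  simp only [jump, Fin.cast_val_eq_self, htelescope]
  have h0 := h 0
  rw [zero_add] at h0
  rw [h0, add_sub_cancel_left]

theorem apply_add_nsmul_of_apply_add {M N : Type*} [AddMonoid M] [AddMonoid N] {f : M → N}
    {s : M} {c : N} (h : ∀ x, f (x + s) = f x + c) (j : ℕ) (x : M) :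
    f (x + j • s) = f x + j • c := by
  induction j with
  | zero => simp
  | succ j ih => rw [succ_nsmul, ← add_assoc, h, ih, succ_nsmul, add_assoc]

theorem coprime_card_descents_of_shift {f : Fin n → Fin n} (hf : Function.Injective f) {d : ℕ}
    (hdn : d ∣ n) {C : Fin n} (h : ∀ x, f (x + d) = f x + C) :
    Nat.Coprime #{x | f (x + 1) < f x} (n / d) := by
  set D := #{x | f (x + 1) < f x}
  obtain ⟨q, rfl⟩ := hdn
  have hdq : 0 < d * q := Nat.pos_of_neZero _
  rw [Nat.mul_div_cancel_left q (Nat.pos_of_mul_pos_right hdq)]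
  obtain ⟨j, hj⟩ := Nat.gcd_dvd_right D q
  obtain ⟨e, he⟩ := Nat.gcd_dvd_left D q
  have hmul : j * (d * D) = d * q * e := by
    rw [he, show d * q * e = d * (Nat.gcd D q * j) * e by rw [← hj]]
    ring
  -- `j • C = 0` because `g ∣ D`, so `f` takes the same value at `0` and at `j * d = n / g`.
  have hreturn : f (0 + j • (d : Fin (d * q))) = f 0 := by
    rw [apply_add_nsmul_of_apply_add h, shift_eq_natCast_mul_card h, nsmul_eq_mul,
      ← Nat.cast_mul, hmul, Fin.natCast_eq_zero.mpr (dvd_mul_right _ _), add_zero]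
  have hdvd : d * q ∣ j * d := by
    have := hf hreturn
    rwa [zero_add, nsmul_eq_mul, ← Nat.cast_mul, Fin.natCast_eq_zero] at this
  have hjd : 0 < j * d := Nat.mul_pos
    (Nat.pos_of_ne_zero fun hj0 => by simp [hj0] at hj; simp [hj] at hdq)
    (Nat.pos_of_mul_pos_right hdq)
  rw [hj, show d * (Nat.gcd D q * j) = Nat.gcd D q * (j * d) by ring] at hdvd
  exact Nat.dvd_one.mp (Nat.dvd_of_mul_dvd_mul_right hjd (by simpa using hdvd))

end Cyclic

theorem no_canonical_pap_of_period (n k d : ℕ) (hn0 : 0 < n) (hdn : d ∣ n)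
    (hgcd : 1 < Nat.gcd k (n / d)) :
    ¬ ∃ A : Equiv.Perm (Fin n), IsPAP A ∧ ascents A = k ∧
      A ⟨n - 1, by omega⟩ = ⟨n - 1, by omega⟩ ∧
      tauOp^[d] A = A ∧ ∀ ℓ : ℕ, 0 < ℓ → tauOp^[ℓ] A = A → d ≤ ℓ := by
  rintro ⟨A, -, hk, hcanon, hperiod, -⟩
  obtain ⟨m, rfl⟩ : ∃ m, n = m + 1 := ⟨n - 1, by omega⟩
  obtain ⟨C, hC⟩ := iterate_tauOp_apply hcanon d
  have hshift : ∀ x, A (x + d) = A x + C := fun x => by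
    simpa [hperiod] using hC (x + d)
  set g := Nat.gcd k ((m + 1) / d)
  have hgn : g ∣ m + 1 := (Nat.gcd_dvd_right _ _).trans (Nat.div_dvd_of_dvd hdn)
  have hdescents : #{x | A (x + 1) < A x} = m + 1 - k := by
    have := card_lt_apply_add_one_add_card_gt A.injective
      (hgcd.trans_le (Nat.le_of_dvd (Nat.succ_pos m) hgn))
    rw [← ascents_eq_card_lt_apply_add_one hcanon, hk] at this
    omega
  have hg_dvd : g ∣ #{x | A (x + 1) < A x} :=
    hdescents ▸ Nat.dvd_sub hgn (Nat.gcd_dvd_left _ _)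
  have hcoprime := coprime_card_descents_of_shift A.injective hdn hshift
  exact hgcd.ne' (Nat.eq_one_of_dvd_coprimes hcoprime hg_dvd (Nat.gcd_dvd_right _ _))
end

section
/- Let n be an even positive integer and let k be an integer with 1 ≤ k ≤ n−2. Then S_{n,k} = (n−k)·S_{n−1,k−1} + (k+1)·S_{n−1,k}. -/
open Finset

namespace PAPProof

open Equiv Finset

/-! ### Auxiliary Fin lemmas -/

lemma fin_mk_eq_add_one {N : ℕ} (i : Fin (N + 1)) (h : i.val + 1 < N + 1) :
    (⟨i.val + 1, h⟩ : Fin (N + 1)) = i + 1 := by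
  have hne : i ≠ Fin.last N := by
    intro he; subst he; simp [Fin.last] at h
  ext
  rw [Fin.val_add_one, if_neg hne]

/-! ### Parity structure of PAPs -/

lemma parityFormula {N : ℕ} (A : Equiv.Perm (Fin (N + 1))) (h : IsPAP A) :
    ∀ i : Fin (N + 1), (A i).val % 2 = ((A 0).val + i.val) % 2 := by
  intro i
  induction i using Fin.induction with
  | zero => simp
  | succ t ih =>
    have hlt : (t.castSucc).val + 1 < N + 1 := by
      simp only [Fin.coe_castSucc]
      omega
    have hne := h t.castSucc hlt
    have heq : (⟨(t.castSucc).val + 1, hlt⟩ : Fin (N + 1)) = t.succ := by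
      ext; simp
    rw [heq] at hne
    have hv : (t.succ).val = (t.castSucc).val + 1 := by simp
    rw [hv]
    omega

/-- A PAP of a space of even size is "cyclically" parity alternating. -/
lemma isPAP_iff_cyclic {N : ℕ} (hN : N % 2 = 1) (A : Equiv.Perm (Fin (N + 1))) :
    IsPAP A ↔ ∀ p : Fin (N + 1), (A p).val % 2 ≠ (A (p + 1)).val % 2 := by
  constructor
  · intro h p
    by_cases hp : p = Fin.last N
    · subst hp
      rw [Fin.last_add_one]
      have h1 := parityFormula A h (Fin.last N)
      simp only [Fin.val_last] at h1
      omega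
    · have hlt : p.val + 1 < N + 1 := by
        have := Fin.val_lt_last hp; omega
      have := h p hlt
      rwa [fin_mk_eq_add_one p hlt] at this
  · intro h i hlt
    have := h i
    rwa [← fin_mk_eq_add_one i hlt] at this

/-- For a PAP on an odd-size space, the first entry is even. -/
lemma pap_zero_even {M : ℕ} (hM : M % 2 = 0) (b : Equiv.Perm (Fin (M + 1)))
    (hb : IsPAP b) : (b 0).val % 2 = 0 := by
  by_contra h
  have key : ∀ t : Fin (M + 1), (b t).val % 2 + t.val % 2 = 1 := by
    intro t; have := parityFormula b hb t; omega
  have hsum : ∑ t : Fin (M + 1), ((b t).val % 2 + t.val % 2) = M + 1 := by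
    rw [Finset.sum_congr rfl fun t _ => key t]
    simp [Finset.card_univ]
  rw [Finset.sum_add_distrib] at hsum
  have hperm : ∑ t : Fin (M + 1), (b t).val % 2 = ∑ t : Fin (M + 1), t.val % 2 :=
    Equiv.sum_comp b (fun v : Fin (M + 1) => v.val % 2)
  omega

lemma pap_parity {M : ℕ} (hM : M % 2 = 0) (b : Equiv.Perm (Fin (M + 1)))
    (hb : IsPAP b) (t : Fin (M + 1)) : (b t).val % 2 = t.val % 2 := by
  have h1 := parityFormula b hb t
  have h2 := pap_zero_even hM b hb
  omega

/-! ### The extension of a permutation of `Fin m` to `Fin (m+1)` fixing the top. -/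

def extPerm {m : ℕ} (b : Equiv.Perm (Fin m)) : Equiv.Perm (Fin (m + 1)) where
  toFun := Fin.lastCases (Fin.last m) (fun t => (b t).castSucc)
  invFun := Fin.lastCases (Fin.last m) (fun t => (b.symm t).castSucc)
  left_inv := by
    intro i
    induction i using Fin.lastCases with
    | last => simp
    | cast t => simp
  right_inv := by
    intro i
    induction i using Fin.lastCases with
    | last => simp
    | cast t => simp

@[simp] lemma extPerm_last {m : ℕ} (b : Equiv.Perm (Fin m)) :
    extPerm b (Fin.last m) = Fin.last m := by
  simp [extPerm, Equiv.coe_fn_mk]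

@[simp] lemma extPerm_castSucc {m : ℕ} (b : Equiv.Perm (Fin m)) (t : Fin m) :
    extPerm b t.castSucc = (b t).castSucc := by
  simp [extPerm, Equiv.coe_fn_mk]

@[simp] lemma extPerm_symm_last {m : ℕ} (b : Equiv.Perm (Fin m)) :
    (extPerm b).symm (Fin.last m) = Fin.last m := by
  simp [extPerm, Equiv.coe_fn_mk]

/-! ### Rotated extensions -/

def rotPerm {m : ℕ} (b : Equiv.Perm (Fin m)) (j : Fin (m + 1)) : Equiv.Perm (Fin (m + 1)) :=
  (extPerm b) * (Equiv.addRight j)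

lemma rotPerm_apply {m : ℕ} (b : Equiv.Perm (Fin m)) (j i : Fin (m + 1)) :
    rotPerm b j i = extPerm b (i + j) := rfl

/-- Cyclic parity alternation for the extension. -/
lemma ext_cyclic {M : ℕ} (hM : M % 2 = 0) (b : Equiv.Perm (Fin (M + 1))) (hb : IsPAP b) :
    ∀ p : Fin (M + 2), (extPerm b p).val % 2 ≠ (extPerm b (p + 1)).val % 2 := by
  intro p
  induction p using Fin.lastCases with
  | last =>
    rw [Fin.last_add_one, extPerm_last]
    have h0 : (0 : Fin (M + 2)) = (0 : Fin (M + 1)).castSucc := by simp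
    rw [h0, extPerm_castSucc]
    have := pap_zero_even hM b hb
    simp only [Fin.val_last, Fin.coe_castSucc]
    omega
  | cast t =>
    by_cases ht : t.val + 1 < M + 1
    · have hstep : (t.castSucc : Fin (M + 2)) + 1 = (⟨t.val + 1, ht⟩ : Fin (M + 1)).castSucc := by
        have hne : (t.castSucc : Fin (M + 2)) ≠ Fin.last (M + 1) := by
          intro he
          have := congrArg Fin.val he
          simp [Fin.last] at this
          omega
        ext
        rw [Fin.val_add_one, if_neg hne]
        simp
      rw [hstep, extPerm_castSucc, extPerm_castSucc]
      have := hb t ht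
      simpa using this
    · have htval : t.val = M := by have := t.is_lt; omega
      have hstep : (t.castSucc : Fin (M + 2)) + 1 = Fin.last (M + 1) := by
        have hne : (t.castSucc : Fin (M + 2)) ≠ Fin.last (M + 1) := by
          intro he
          have h2 := congrArg Fin.val he
          simp [Fin.last] at h2
          omega
        ext
        rw [Fin.val_add_one, if_neg hne]
        simp [htval, Fin.last]
      rw [hstep, extPerm_castSucc, extPerm_last]
      have := pap_parity hM b hb t
      simp only [Fin.coe_castSucc, Fin.val_last]
      omega

lemma isPAP_of_ext_cyclic {M : ℕ} (b : Equiv.Perm (Fin (M + 1)))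
    (h : ∀ p : Fin (M + 2), (extPerm b p).val % 2 ≠ (extPerm b (p + 1)).val % 2) :
    IsPAP b := by
  intro t ht
  have hp := h t.castSucc
  have hstep : (t.castSucc : Fin (M + 2)) + 1 = (⟨t.val + 1, ht⟩ : Fin (M + 1)).castSucc := by
    have hne : (t.castSucc : Fin (M + 2)) ≠ Fin.last (M + 1) := by
      intro he
      have := congrArg Fin.val he
      simp [Fin.last] at this
      omega
    ext
    rw [Fin.val_add_one, if_neg hne]
    simp
  rw [hstep, extPerm_castSucc, extPerm_castSucc] at hp
  simpa using hp

lemma isPAP_rotPerm_iff {M : ℕ} (hM : M % 2 = 0) (b : Equiv.Perm (Fin (M + 1)))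
    (j : Fin (M + 2)) : IsPAP (rotPerm b j) ↔ IsPAP b := by
  have hodd : (M + 1) % 2 = 1 := by omega
  rw [isPAP_iff_cyclic hodd]
  constructor
  · intro h
    apply isPAP_of_ext_cyclic
    intro p
    have hh := h (p - j)
    rw [rotPerm_apply, rotPerm_apply] at hh
    have e1 : (p - j) + j = p := sub_add_cancel p j
    have e2 : ((p - j) + 1) + j = p + 1 := by
      rw [add_right_comm, e1]
    rw [e1, e2] at hh
    exact hh
  · intro hb p
    rw [rotPerm_apply, rotPerm_apply]
    have hh := ext_cyclic hM b hb (p + j)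
    have e : p + 1 + j = p + j + 1 := add_right_comm p 1 j
    rw [e]
    exact hh

/-! ### Counting cyclic ascents -/

lemma card_cascSet {M : ℕ} (b : Equiv.Perm (Fin (M + 1))) :
    (univ.filter fun p : Fin (M + 2) => extPerm b p < extPerm b (p + 1)).card
      = ascents b + 1 := by
  rw [Finset.card_filter, Fin.sum_univ_castSucc]
  have hlast : ¬ (extPerm b (Fin.last (M + 1)) < extPerm b (Fin.last (M + 1) + 1)) := by
    rw [extPerm_last]
    exact not_lt.mpr (Fin.le_last _)
  rw [if_neg hlast, add_zero]
  unfold ascents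
  rw [Finset.card_filter, Fin.sum_univ_castSucc, Fin.sum_univ_castSucc (n := M)]
  have hlast2 : ¬ (∃ h : (Fin.last M).val + 1 < M + 1, b (Fin.last M) < b ⟨(Fin.last M).val + 1, h⟩) := by
    rintro ⟨h, -⟩
    simp [Fin.last] at h
  rw [if_neg hlast2, add_zero]
  have htop : extPerm b ((Fin.last M).castSucc) < extPerm b ((Fin.last M).castSucc + 1) := by
    have hstep : ((Fin.last M).castSucc : Fin (M + 2)) + 1 = Fin.last (M + 1) := by
      have hne : ((Fin.last M).castSucc : Fin (M + 2)) ≠ Fin.last (M + 1) := by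
        intro he
        have := congrArg Fin.val he
        simp [Fin.last] at this
      ext
      rw [Fin.val_add_one, if_neg hne]
      simp [Fin.last]
    rw [hstep, extPerm_castSucc, extPerm_last]
    exact Fin.castSucc_lt_last _
  rw [if_pos htop]
  congr 1
  apply Finset.sum_congr rfl
  intro s _
  have ht : (s.castSucc : Fin (M + 1)).val + 1 < M + 1 := by
    have hs := s.is_lt
    simp only [Fin.coe_castSucc]
    omega
  have hstep : ((s.castSucc.castSucc : Fin (M + 2))) + 1
      = ((⟨(s.castSucc : Fin (M + 1)).val + 1, ht⟩ : Fin (M + 1)).castSucc) := by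
    have hne : (s.castSucc.castSucc : Fin (M + 2)) ≠ Fin.last (M + 1) := by
      intro he
      have := congrArg Fin.val he
      simp [Fin.last] at this
      have := s.is_lt; omega
    ext
    rw [Fin.val_add_one, if_neg hne]
    simp
  rw [hstep, extPerm_castSucc, extPerm_castSucc]
  refine if_congr ?_ rfl rfl
  constructor
  · intro hlt
    exact ⟨ht, by simpa using hlt⟩
  · rintro ⟨h, hlt⟩
    simp only [Fin.castSucc_lt_castSucc_iff]
    exact hlt

/-! ### Ascents of rotations -/

lemma ascents_rotPerm {M : ℕ} (b : Equiv.Perm (Fin (M + 1))) (j : Fin (M + 2)) :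
    ascents (rotPerm b j) =
      ((univ.filter fun p : Fin (M + 2) => extPerm b p < extPerm b (p + 1)).erase
        (Fin.last (M + 1) + j)).card := by
  unfold ascents
  apply Finset.card_bij' (fun i _ => i + j) (fun p _ => p - j)
  · intro i hi
    rw [Finset.mem_filter] at hi
    obtain ⟨-, h, hlt⟩ := hi
    have hne : i ≠ Fin.last (M + 1) := by
      intro he; subst he; simp [Fin.last] at h
    rw [Finset.mem_erase, Finset.mem_filter]
    refine ⟨fun he => hne (by exact add_right_cancel he), Finset.mem_univ _, ?_⟩
    rw [rotPerm_apply, rotPerm_apply, fin_mk_eq_add_one i h] at hlt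
    have e : i + 1 + j = i + j + 1 := add_right_comm i 1 j
    rw [e] at hlt
    exact hlt
  · intro p hp
    rw [Finset.mem_erase, Finset.mem_filter] at hp
    obtain ⟨hne, -, hlt⟩ := hp
    have hine : p - j ≠ Fin.last (M + 1) := by
      intro he
      apply hne
      rw [← he, sub_add_cancel]
    have h : (p - j).val + 1 < M + 2 := by
      have := Fin.val_lt_last hine; omega
    rw [Finset.mem_filter]
    refine ⟨Finset.mem_univ _, h, ?_⟩
    rw [rotPerm_apply, rotPerm_apply, fin_mk_eq_add_one _ h]
    have e1 : p - j + 1 + j = p - j + j + 1 := add_right_comm (p - j) 1 j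
    have e2 : p - j + j = p := sub_add_cancel p j
    rw [e1, e2]
    exact hlt
  · intro i _
    show i + j - j = i
    exact add_sub_cancel_right i j
  · intro p _
    show p - j + j = p
    exact sub_add_cancel p j

/-! ### Counting rotations with a given number of ascents -/

lemma card_filter_shift_mem {M : ℕ} (S : Finset (Fin (M + 2))) (c : Fin (M + 2)) :
    (univ.filter fun j : Fin (M + 2) => c + j ∈ S).card = S.card := by
  have h := Finset.card_bij' (s := univ.filter fun j : Fin (M + 2) => c + j ∈ S)
    (t := S) (fun j _ => c + j) (fun p _ => p - c)
    (fun j hj => by rw [Finset.mem_filter] at hj; exact hj.2)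
    (fun p hp => by
      rw [Finset.mem_filter]
      refine ⟨Finset.mem_univ _, ?_⟩
      show c + (p - c) ∈ S
      have e : c + (p - c) = p := by abel
      rw [e]
      exact hp)
    (fun j _ => by
      show c + j - c = j
      rw [add_sub_cancel_left])
    (fun p _ => by
      show c + (p - c) = p
      abel)
  exact h

lemma count_j {M k : ℕ} (hk : 1 ≤ k) (b : Equiv.Perm (Fin (M + 1))) :
    (univ.filter fun j : Fin (M + 2) => ascents (rotPerm b j) = k).card =
      if ascents b = k then k + 1
      else if ascents b = k - 1 then (M + 2) - k else 0 := by
  set S := univ.filter fun p : Fin (M + 2) => extPerm b p < extPerm b (p + 1) with hS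
  have hcard : S.card = ascents b + 1 := card_cascSet b
  have hasc : ∀ j : Fin (M + 2), ascents (rotPerm b j) =
      if Fin.last (M + 1) + j ∈ S then ascents b else ascents b + 1 := by
    intro j
    rw [ascents_rotPerm]
    by_cases hm : Fin.last (M + 1) + j ∈ S
    · rw [if_pos hm, Finset.card_erase_of_mem hm, hcard]
      omega
    · rw [if_neg hm, Finset.erase_eq_of_notMem hm, hcard]
  by_cases h1 : ascents b = k
  · rw [if_pos h1]
    have hfil : (univ.filter fun j : Fin (M + 2) => ascents (rotPerm b j) = k)
        = univ.filter fun j : Fin (M + 2) => Fin.last (M + 1) + j ∈ S := by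
      apply Finset.filter_congr
      intro j _
      rw [hasc j]
      by_cases hm : Fin.last (M + 1) + j ∈ S
      · rw [if_pos hm]
        exact iff_of_true h1 hm
      · rw [if_neg hm]
        exact iff_of_false (by omega) hm
    rw [hfil, card_filter_shift_mem, hcard, h1]
  · by_cases h2 : ascents b = k - 1
    · rw [if_neg h1, if_pos h2]
      have hfil : (univ.filter fun j : Fin (M + 2) => ascents (rotPerm b j) = k)
          = univ.filter fun j : Fin (M + 2) => ¬ (Fin.last (M + 1) + j ∈ S) := by
        apply Finset.filter_congr
        intro j _
        rw [hasc j]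
        by_cases hm : Fin.last (M + 1) + j ∈ S
        · rw [if_pos hm]
          exact iff_of_false h1 (not_not_intro hm)
        · rw [if_neg hm]
          exact iff_of_true (by omega) hm
      rw [hfil]
      have hcompl : (univ.filter fun j : Fin (M + 2) => ¬ (Fin.last (M + 1) + j ∈ S)).card
          = (M + 2) - (univ.filter fun j : Fin (M + 2) => Fin.last (M + 1) + j ∈ S).card := by
        have := Finset.card_filter_add_card_filter_not
          (s := (univ : Finset (Fin (M + 2))))
          (p := fun j => Fin.last (M + 1) + j ∈ S)
        rw [Finset.card_univ, Fintype.card_fin] at this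
        omega
      rw [hcompl, card_filter_shift_mem, hcard, h2]
      omega
    · rw [if_neg h1, if_neg h2]
      rw [Finset.card_eq_zero, Finset.filter_eq_empty_iff]
      intro j _
      rw [hasc j]
      by_cases hm : Fin.last (M + 1) + j ∈ S
      · rw [if_pos hm]; omega
      · rw [if_neg hm]; omega

/-! ### The decomposition bijection -/

lemma extPerm_eq_last_iff {m : ℕ} (b : Equiv.Perm (Fin m)) (p : Fin (m + 1)) :
    extPerm b p = Fin.last m ↔ p = Fin.last m := by
  constructor
  · intro h
    induction p using Fin.lastCases with
    | last => rfl
    | cast t =>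
      rw [extPerm_castSucc] at h
      exact absurd h (Fin.castSucc_lt_last (b t)).ne
  · rintro rfl
    exact extPerm_last b

lemma rotPerm_bijective (M : ℕ) :
    Function.Bijective
      (fun p : Fin (M + 2) × Equiv.Perm (Fin (M + 1)) => rotPerm p.2 p.1) := by
  rw [Fintype.bijective_iff_injective_and_card]
  constructor
  · rintro ⟨j, b⟩ ⟨j', b'⟩ h
    simp only at h
    have hj : j = j' := by
      have happ := congrArg (fun f : Equiv.Perm (Fin (M + 2)) => f (Fin.last (M + 1) - j)) h
      simp only [rotPerm_apply] at happ
      rw [sub_add_cancel, extPerm_last] at happ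
      have h2 : Fin.last (M + 1) - j + j' = Fin.last (M + 1) :=
        (extPerm_eq_last_iff b' _).mp happ.symm
      have h3 : Fin.last (M + 1) - j + j = Fin.last (M + 1) := sub_add_cancel _ j
      exact (add_left_cancel (h2.trans h3.symm)).symm
    subst hj
    have hb : extPerm b = extPerm b' := mul_right_cancel h
    have hbb : b = b' := by
      apply Equiv.ext
      intro t
      have h4 := congrArg (fun f : Equiv.Perm (Fin (M + 2)) => f t.castSucc) hb
      simp only [extPerm_castSucc] at h4
      exact Fin.castSucc_injective _ h4
    rw [hbb]
  · rw [Fintype.card_prod, Fintype.card_perm, Fintype.card_perm, Fintype.card_fin,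
      Fintype.card_fin]
    exact (Nat.factorial_succ (M + 1)).symm

/-! ### Counting helpers -/

lemma card_filter_equiv {α β : Type*} [Fintype α] [Fintype β] [DecidableEq β]
    (e : α ≃ β) (P : β → Prop) [DecidablePred P] :
    (univ.filter fun a => P (e a)).card = (univ.filter P).card := by
  apply Finset.card_bij' (fun a _ => e a) (fun b _ => e.symm b)
  · intro a ha
    rw [Finset.mem_filter] at ha ⊢
    exact ⟨Finset.mem_univ _, ha.2⟩
  · intro bb hb
    rw [Finset.mem_filter] at hb ⊢
    refine ⟨Finset.mem_univ _, ?_⟩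
    rw [Equiv.apply_symm_apply]
    exact hb.2
  · intro a _; exact e.symm_apply_apply a
  · intro bb _; exact e.apply_symm_apply bb

lemma card_filter_prod {α β : Type*} [Fintype α] [Fintype β] [DecidableEq β]
    (Q : α × β → Prop) [DecidablePred Q] :
    (univ.filter Q).card = ∑ b : β, (univ.filter fun a => Q (a, b)).card := by
  rw [Finset.card_eq_sum_card_fiberwise
    (f := fun p : α × β => p.2) (t := univ) (fun x _ => Finset.mem_univ _)]
  apply Finset.sum_congr rfl
  intro b _
  refine Finset.card_bij' (fun p _ => p.1) (fun a _ => (a, b)) ?hi ?hj ?li ?ri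
  case hi =>
    intro p hp
    rw [Finset.mem_filter] at hp
    rw [Finset.mem_filter]
    refine ⟨Finset.mem_univ _, ?_⟩
    have h2 := hp.2
    have h1 : p ∈ Finset.filter Q Finset.univ := hp.1
    rw [Finset.mem_filter] at h1
    have he : (p.1, b) = p := Prod.ext rfl h2.symm
    rw [he]
    exact h1.2
  case hj =>
    intro a ha
    rw [Finset.mem_filter] at ha
    rw [Finset.mem_filter, Finset.mem_filter]
    exact ⟨⟨Finset.mem_univ _, ha.2⟩, rfl⟩
  case li =>
    intro p hp
    rw [Finset.mem_filter] at hp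
    exact Prod.ext rfl hp.2.symm
  case ri =>
    intro a _
    rfl

end PAPProof

theorem papTotal_recurrence_even (n k : ℕ) (hn : Even n) (hn0 : 0 < n)
    (hk1 : 1 ≤ k) (hk2 : k ≤ n - 2) :
    papTotal n k = (n - k) * papTotal (n - 1) (k - 1) + (k + 1) * papTotal (n - 1) k := by
  classical
  obtain ⟨M, rfl⟩ : ∃ M, n = M + 2 := by
    rcases hn with ⟨r, hr⟩
    exact ⟨n - 2, by omega⟩
  have hM : M % 2 = 0 := by
    rcases hn with ⟨r, hr⟩
    omega
  have hred1 : M + 2 - 1 = M + 1 := rfl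
  rw [hred1]
  have hbij := PAPProof.rotPerm_bijective M
  set G := fun p : Fin (M + 2) × Equiv.Perm (Fin (M + 1)) => PAPProof.rotPerm p.2 p.1 with hG
  let eG : (Fin (M + 2) × Equiv.Perm (Fin (M + 1))) ≃ Equiv.Perm (Fin (M + 2)) :=
    Equiv.ofBijective G hbij
  have step1 : papTotal (M + 2) k =
      (univ.filter fun p : Fin (M + 2) × Equiv.Perm (Fin (M + 1)) =>
        IsPAP (G p) ∧ ascents (G p) = k).card := by
    unfold papTotal
    rw [← PAPProof.card_filter_equiv eG (fun A => IsPAP A ∧ ascents A = k)]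
    congr 1
  rw [step1, PAPProof.card_filter_prod]
  have step2 : ∀ b : Equiv.Perm (Fin (M + 1)),
      (univ.filter fun j : Fin (M + 2) =>
          IsPAP (G (j, b)) ∧ ascents (G (j, b)) = k).card
      = (if IsPAP b ∧ ascents b = k then k + 1 else 0)
        + (if IsPAP b ∧ ascents b = k - 1 then (M + 2) - k else 0) := by
    intro b
    by_cases hPAP : IsPAP b
    · have hfil : (univ.filter fun j : Fin (M + 2) =>
          IsPAP (G (j, b)) ∧ ascents (G (j, b)) = k)
          = univ.filter fun j : Fin (M + 2) => ascents (PAPProof.rotPerm b j) = k := by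
        apply Finset.filter_congr
        intro j _
        simp only [hG]
        rw [PAPProof.isPAP_rotPerm_iff hM b j]
        simp [hPAP]
      rw [hfil, PAPProof.count_j hk1 b]
      by_cases h1 : ascents b = k
      · have h2 : ascents b ≠ k - 1 := by omega
        simp [h1, h2, hPAP]
        omega
      · by_cases h2 : ascents b = k - 1
        · have hne : k - 1 ≠ k := by omega
          simp [h1, h2, hPAP, hne]
        · simp [h1, h2, hPAP]
    · have hfil : (univ.filter fun j : Fin (M + 2) =>
          IsPAP (G (j, b)) ∧ ascents (G (j, b)) = k) = ∅ := by
        rw [Finset.filter_eq_empty_iff]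
        intro j _
        simp only [hG]
        rw [PAPProof.isPAP_rotPerm_iff hM b j]
        tauto
      rw [hfil]
      simp [hPAP]
  rw [Finset.sum_congr rfl fun b _ => step2 b, Finset.sum_add_distrib]
  have sum1 : (∑ b : Equiv.Perm (Fin (M + 1)),
      if IsPAP b ∧ ascents b = k then k + 1 else 0) = (k + 1) * papTotal (M + 1) k := by
    rw [← Finset.sum_filter]
    rw [Finset.sum_const, smul_eq_mul]
    unfold papTotal
    rw [mul_comm]
  have sum2 : (∑ b : Equiv.Perm (Fin (M + 1)),
      if IsPAP b ∧ ascents b = k - 1 then (M + 2) - k else 0)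
      = ((M + 2) - k) * papTotal (M + 1) (k - 1) := by
    rw [← Finset.sum_filter]
    rw [Finset.sum_const, smul_eq_mul]
    unfold papTotal
    rw [mul_comm]
  rw [sum1, sum2]
  ring
end

section
/- For every positive integer n and every integer k with 0 ≤ k ≤ n−1, S_{n,k} = S_{n,n−k−1}. -/
open Finset

/-!
Reversing a permutation word, `A ↦ A * Fin.revPerm`, is an involution that preserves
parity-alternation and exchanges ascents with descents; since each of the `n - 1` adjacent
positions of a word is either an ascent or a descent, it sends `k` ascents to `n - 1 - k`.
-/

open Equiv

theorem ascents_eq_card_castSucc_lt_succ {m : ℕ} (A : Perm (Fin (m + 1))) :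
    ascents A = #{i : Fin m | A i.castSucc < A i.succ} := by
  rw [ascents, ← card_map Fin.castSuccEmb (s := {i : Fin m | A i.castSucc < A i.succ})]
  congr 1 with j
  simp only [mem_filter, mem_univ, true_and, mem_map, Fin.coe_castSuccEmb]
  constructor
  · rintro ⟨hj, hlt⟩
    exact ⟨⟨j, by omega⟩, hlt, rfl⟩
  · rintro ⟨i, hlt, rfl⟩
    exact ⟨by simp, hlt⟩

theorem isPAP_iff_forall_castSucc {m : ℕ} (A : Perm (Fin (m + 1))) :
    IsPAP A ↔ ∀ i : Fin m, (A i.castSucc).val % 2 ≠ (A i.succ).val % 2 :=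
  ⟨fun hA i => hA i.castSucc (by simp), fun hA j hj => hA ⟨j, by omega⟩⟩

theorem IsPAP.mul_revPerm {n : ℕ} {A : Perm (Fin n)} (hA : IsPAP A) :
    IsPAP (A * Fin.revPerm) := by
  cases n with
  | zero => exact fun i => i.elim0
  | succ m =>
    rw [isPAP_iff_forall_castSucc] at hA ⊢
    intro i
    simpa [Fin.rev_castSucc, Fin.rev_succ] using (hA i.rev).symm

theorem ascents_mul_revPerm_add_ascents {n : ℕ} (A : Perm (Fin n)) :
    ascents (A * Fin.revPerm) + ascents A = n - 1 := by
  cases n with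
  | zero => simp [ascents]
  | succ m =>
    have hdesc : ascents (A * Fin.revPerm) = #{i : Fin m | ¬ A i.castSucc < A i.succ} := by
      rw [ascents_eq_card_castSucc_lt_succ]
      refine card_equiv Fin.revPerm fun i => ?_
      have hne : A i.rev.succ ≠ A i.rev.castSucc :=
        A.injective.ne (Fin.castSucc_lt_succ).ne'
      simp [Fin.rev_castSucc, Fin.rev_succ, hne.le_iff_lt]
    rw [hdesc, ascents_eq_card_castSucc_lt_succ, add_comm, card_filter_add_card_filter_not,
      card_univ, Fintype.card_fin, Nat.add_sub_cancel]

theorem mul_revPerm_mul_revPerm {n : ℕ} (A : Perm (Fin n)) :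
    A * Fin.revPerm * Fin.revPerm = A := by
  ext; simp

theorem papTotal_symm_general (n k : ℕ) (hk : k ≤ n - 1) :
    papTotal n k = papTotal n (n - k - 1) := by
  refine card_nbij' (· * Fin.revPerm) (· * Fin.revPerm) ?_ ?_
    (fun A _ => mul_revPerm_mul_revPerm A) (fun A _ => mul_revPerm_mul_revPerm A)
  all_goals
    intro A hA
    dsimp only
    obtain ⟨hPAP, hasc⟩ := (mem_filter.1 hA).2
    have := ascents_mul_revPerm_add_ascents A
    exact mem_filter.2 ⟨mem_univ _, hPAP.mul_revPerm, by omega⟩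

theorem papTotal_symm (n k : ℕ) (hn0 : 0 < n) (hk : k ≤ n - 1) :
    papTotal n k = papTotal n (n - k - 1) :=
  papTotal_symm_general n k hk
end
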